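/- Let X_1, ..., X_D be independent random vectors, each taking values in R^L and square-integrable, representing D temporal features of sequence length L. Let f be the additive model f = Σ_{j=1}^{D} g_j(X_j) with each g_j(X_j) square-integrable. Fix a time window W ⊆ {1, ..., L} for feature 1, let W̄ = {1, ..., L} \ W, and suppose g_1 decomposes additively over the window as g_1(X_1) = g_W(X_{1,W}) + g_W̄(X_{1,W̄}), where X_{1,W} and X_{1,W̄} denote the restrictions of X_1 to the coordinates in W and W̄ respectively, and g_W(X_{1,W}), g_W̄(X_{1,W̄}) are square-integrable. Let Y be a square-integrable real-valued target, and let X_1' be an independent copy of X_1, independent of (X_1, ..., X_D, Y). Then the expected importance score of the window W for feature 1, namely E[ I(f, X_1, W) ] = E[(Y - (g_W(X'_{1,W}) + g_W̄(X_{1,W̄}) + Σ_{j=2}^{D} g_j(X_j)))^2] - E[(Y - Σ_{j=1}^{D} g_j(X_j))^2], equals 2*[cov(Y, g_W(X_{1,W})) - cov(g_W(X_{1,W}), g_W̄(X_{1,W̄}))]. -/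

import Mathlib

/-!
Write the residual of the model as `A - U`, where `U = g_W(X₁)` and
`A = Y - g_W̄(X₁) - Σ_{j ≥ 2} g_j(X_j)`. Perturbing the window replaces `U` by
`U' = g_W(X₁')`, which has the law of `U` and is independent of `A`. Hence
`E(A - U')² - E(A - U)² = 2 E[AU] - 2 E[A] E[U] = 2 cov(A, U)`, since `U` and `U'` have the same
second moment. Expanding `cov(A, U)` bilinearly, the terms `cov(g_j(X_j), U)` with `j ≥ 2` vanish
by independence of the features.
-/

open MeasureTheory ProbabilityTheory Finset

/-- Covariance of two real-valued random variables w.r.t. a measure `μ`. -/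
noncomputable def cov {Ω : Type*} [MeasurableSpace Ω] (μ : Measure Ω) (X Y : Ω → ℝ) : ℝ :=
  ∫ ω, (X ω - ∫ ω', X ω' ∂μ) * (Y ω - ∫ ω', Y ω' ∂μ) ∂μ

lemma cov_eq_covariance {Ω : Type*} [MeasurableSpace Ω] (μ : Measure Ω) (X Y : Ω → ℝ) :
    cov μ X Y = cov[X, Y; μ] := rfl

namespace ProbabilityTheory

variable {Ω : Type*} [MeasurableSpace Ω] {μ : Measure Ω}

lemma integral_sub_sq {A B : Ω → ℝ} (hA : MemLp A 2 μ) (hB : MemLp B 2 μ) :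
    ∫ ω, (A ω - B ω) ^ 2 ∂μ = ∫ ω, A ω ^ 2 ∂μ - 2 * ∫ ω, A ω * B ω ∂μ + ∫ ω, B ω ^ 2 ∂μ := by
  have hAB : Integrable (fun ω => 2 * (A ω * B ω)) μ := (hA.integrable_mul hB).const_mul 2
  have hdiff : Integrable (fun ω => A ω ^ 2 - 2 * (A ω * B ω)) μ := hA.integrable_sq.sub hAB
  simp_rw [sub_sq, mul_assoc]
  rw [integral_add hdiff hB.integrable_sq, integral_sub hA.integrable_sq hAB, integral_const_mul]

lemma integral_sub_sq_indep_copy_sub [IsProbabilityMeasure μ] {A U U' : Ω → ℝ}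
    (hA : MemLp A 2 μ) (hU : MemLp U 2 μ) (hid : IdentDistrib U' U μ μ)
    (hindep : IndepFun U' A μ) :
    ∫ ω, (A ω - U' ω) ^ 2 ∂μ - ∫ ω, (A ω - U ω) ^ 2 ∂μ = 2 * cov[A, U; μ] := by
  have hU' : MemLp U' 2 μ := hid.symm.memLp_snd hU
  have hsq : ∫ ω, U' ω ^ 2 ∂μ = ∫ ω, U ω ^ 2 ∂μ :=
    (hid.comp (measurable_id.pow_const 2)).integral_eq
  have hprod : ∫ ω, A ω * U' ω ∂μ = (∫ ω, A ω ∂μ) * ∫ ω, U ω ∂μ := by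
    rw [← hid.integral_eq]
    exact hindep.symm.integral_fun_mul_eq_mul_integral hA.aestronglyMeasurable
      hU'.aestronglyMeasurable
  rw [integral_sub_sq hA hU', integral_sub_sq hA hU, hsq, hprod, covariance_eq_sub hA hU]
  simp only [Pi.mul_apply]
  ring

lemma iIndepFun.covariance_sum_comp_eq_zero {ι β : Type*} [MeasurableSpace β]
    [IsFiniteMeasure μ] {X : ι → Ω → β} (hX : iIndepFun X μ) {g : ι → β → ℝ}
    (hg : ∀ j, Measurable (g j)) (hgL2 : ∀ j, MemLp (fun ω => g j (X j ω)) 2 μ)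
    {s : Finset ι} {i : ι} (hi : i ∉ s) {f : β → ℝ} (hf : Measurable f)
    (hfL2 : MemLp (fun ω => f (X i ω)) 2 μ) :
    cov[fun ω => ∑ j ∈ s, g j (X j ω), fun ω => f (X i ω); μ] = 0 := by
  rw [covariance_fun_sum_left' (fun j _ => hgL2 j) hfL2]
  refine Finset.sum_eq_zero fun j hj => ?_
  have hji : j ≠ i := fun h => hi (h ▸ hj)
  exact ((hX.indepFun hji).comp (hg j) hf).covariance_eq_zero (hgL2 j) hfL2

end ProbabilityTheory

theorem expected_window_importance_score_general
    {Ω : Type*} [MeasurableSpace Ω] (μ : Measure Ω) [IsProbabilityMeasure μ]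
    (D L : ℕ) [NeZero D]
    (X : Fin D → Ω → (Fin L → ℝ))
    (hXindep : iIndepFun X μ)
    (g : Fin D → (Fin L → ℝ) → ℝ) (hgmeas : ∀ j, Measurable (g j))
    (hgL2 : ∀ j, MemLp (fun ω => g j (X j ω)) 2 μ)
    (gW gWbar : (Fin L → ℝ) → ℝ)
    (hgWmeas : Measurable gW) (hgWbarmeas : Measurable gWbar)
    -- additive decomposition of the feature-0 component over the window:
    (hdecomp : ∀ x : Fin L → ℝ, g 0 x = gW x + gWbar x)
    (hgWL2 : MemLp (fun ω => gW (X 0 ω)) 2 μ)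
    (hgWbarL2 : MemLp (fun ω => gWbar (X 0 ω)) 2 μ)
    (Y : Ω → ℝ) (hY : MemLp Y 2 μ)
    (X₁' : Ω → (Fin L → ℝ))
    (hid : IdentDistrib X₁' (X 0) μ μ)
    (hindep : IndepFun X₁' (fun ω => ((fun j => X j ω), Y ω)) μ) :
    (∫ ω, (Y ω - (gW (X₁' ω) + gWbar (X 0 ω) + ∑ j ∈ univ.erase 0, g j (X j ω))) ^ 2 ∂μ)
      - (∫ ω, (Y ω - ∑ j, g j (X j ω)) ^ 2 ∂μ)
      = 2 * (cov μ Y (fun ω => gW (X 0 ω))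
          - cov μ (fun ω => gW (X 0 ω)) (fun ω => gWbar (X 0 ω))) := by
  set U := fun ω => gW (X 0 ω)
  set V := fun ω => gWbar (X 0 ω)
  set S := fun ω => ∑ j ∈ univ.erase 0, g j (X j ω)
  set A := Y - V - S
  have hS : MemLp S 2 μ := memLp_finsetSum _ fun j _ => hgL2 j
  have hA : MemLp A 2 μ := (hY.sub hgWbarL2).sub hS
  have hresidual : ∀ ω, Y ω - ∑ j, g j (X j ω) = A ω - U ω := fun ω => by
    rw [← add_sum_erase _ _ (mem_univ 0), hdecomp]
    simp only [A, U, V, S, Pi.sub_apply]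
    ring
  have hperturbed : ∀ ω, Y ω - (gW (X₁' ω) + gWbar (X 0 ω) + ∑ j ∈ univ.erase 0, g j (X j ω))
      = A ω - gW (X₁' ω) := fun ω => by
    simp only [A, V, S, Pi.sub_apply]
    ring
  have hcopy : IndepFun (fun ω => gW (X₁' ω)) A μ :=
    hindep.comp (ψ := fun p : (Fin D → Fin L → ℝ) × ℝ =>
      p.2 - gWbar (p.1 0) - ∑ j ∈ univ.erase 0, g j (p.1 j)) hgWmeas (by fun_prop)
  simp_rw [hresidual, hperturbed]
  rw [integral_sub_sq_indep_copy_sub (U' := fun ω => gW (X₁' ω)) hA hgWL2 (hid.comp hgWmeas)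
    hcopy, cov_eq_covariance, cov_eq_covariance, covariance_sub_left (hY.sub hgWbarL2) hS hgWL2,
    covariance_sub_left hY hgWbarL2 hgWL2, covariance_comm V U,
    hXindep.covariance_sum_comp_eq_zero hgmeas hgL2 (notMem_erase 0 univ) hgWmeas hgWL2]
  ring

/-- Proposition 1: for an additive model `f = Σ_j g_j (X j)` over independent temporal
features `X j : Ω → (Fin L → ℝ)`, where the feature-0 component decomposes additively as
`g 0 = gW + gWbar` with `gW` depending only on the coordinates in the window `W` and `gWbar`
depending only on the coordinates outside `W`, the expected importance score of the window
`W` (the expected increase in quadratic loss when the in-window part of `X 0` is replaced by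
an independent copy) equals
`2 * (cov(Y, gW (X 0)) - cov(gW (X 0), gWbar (X 0)))`. -/
theorem expected_window_importance_score
    {Ω : Type*} [MeasurableSpace Ω] (μ : Measure Ω) [IsProbabilityMeasure μ]
    (D L : ℕ) [NeZero D]
    (X : Fin D → Ω → (Fin L → ℝ)) (hXmeas : ∀ j, Measurable (X j))
    (hXL2 : ∀ j, MemLp (X j) 2 μ)
    (hXindep : iIndepFun X μ)
    (g : Fin D → (Fin L → ℝ) → ℝ) (hgmeas : ∀ j, Measurable (g j))
    (hgL2 : ∀ j, MemLp (fun ω => g j (X j ω)) 2 μ)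
    (W : Finset (Fin L))
    (gW gWbar : (Fin L → ℝ) → ℝ)
    (hgWmeas : Measurable gW) (hgWbarmeas : Measurable gWbar)
    -- `gW` depends only on the coordinates inside `W`:
    (hgWdep : ∀ x x' : Fin L → ℝ, (∀ k ∈ W, x k = x' k) → gW x = gW x')
    -- `gWbar` depends only on the coordinates outside `W`:
    (hgWbardep : ∀ x x' : Fin L → ℝ, (∀ k ∉ W, x k = x' k) → gWbar x = gWbar x')
    -- additive decomposition of the feature-0 component over the window:
    (hdecomp : ∀ x : Fin L → ℝ, g 0 x = gW x + gWbar x)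
    (hgWL2 : MemLp (fun ω => gW (X 0 ω)) 2 μ)
    (hgWbarL2 : MemLp (fun ω => gWbar (X 0 ω)) 2 μ)
    (Y : Ω → ℝ) (hY : MemLp Y 2 μ)
    (X₁' : Ω → (Fin L → ℝ)) (hX₁'meas : Measurable X₁')
    (hid : IdentDistrib X₁' (X 0) μ μ)
    (hindep : IndepFun X₁' (fun ω => ((fun j => X j ω), Y ω)) μ) :
    (∫ ω, (Y ω - (gW (X₁' ω) + gWbar (X 0 ω) + ∑ j ∈ univ.erase 0, g j (X j ω))) ^ 2 ∂μ)
      - (∫ ω, (Y ω - ∑ j, g j (X j ω)) ^ 2 ∂μ)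
      = 2 * (cov μ Y (fun ω => gW (X 0 ω))
          - cov μ (fun ω => gW (X 0 ω)) (fun ω => gWbar (X 0 ω))) :=
  expected_window_importance_score_general μ D L X hXindep g hgmeas hgL2 gW gWbar hgWmeas hgWbarmeas
    hdecomp hgWL2 hgWbarL2 Y hY X₁' hid hindep
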